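/- For any sector F with a baseline, and any two points p, q in F, there exists an orthogonal polyline from p to q lying entirely inside F with at most 2 bends. -/

import Mathlib

/-! Walk from `p` straight down to the baseline, along the baseline, and straight up to `q`:
the two vertical legs lie in `F` by the histogram property and the horizontal one because the
baseline is convex. -/

/-- A point in the plane. -/
abbrev Pt := ℝ × ℝ

/-- Two points span an axis-parallel (horizontal or vertical) segment. -/
def AxisParallel (a b : Pt) : Prop := a.1 = b.1 ∨ a.2 = b.2

/-- An orthogonal polyline inside the region `f`: a list of at least two points whose
consecutive segments are axis-parallel and contained in `f`. -/
def IsOrthoPolyline (f : Set Pt) (l : List Pt) : Prop :=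
  2 ≤ l.length ∧ l.Chain' (fun a b => AxisParallel a b ∧ segment ℝ a b ⊆ f)

/-- `PolyFrom f p q l`: `l` is an orthogonal polyline inside `f` from `p` to `q`. -/
def PolyFrom (f : Set Pt) (p q : Pt) (l : List Pt) : Prop :=
  IsOrthoPolyline f l ∧ l.head? = some p ∧ l.getLast? = some q

/-- The four axis directions. -/
inductive Dir | up | down | left | right
deriving DecidableEq

/-- The unit vector of a direction. -/
def Dir.vec : Dir → Pt
  | .up => (0, 1)
  | .down => (0, -1)
  | .left => (-1, 0)
  | .right => (1, 0)

/-- The polyline `l` arrives at its final point from direction `d`: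
its last segment travels in direction `d`. -/
def ArrivesFrom (d : Dir) (l : List Pt) : Prop :=
  ∃ x a : Pt, [x, a] <:+ l ∧ ∃ t : ℝ, 0 < t ∧ a - x = t • d.vec

/-- The bend distance from a point `p` inside a face `f` to a port candidate `(a, d)`:
the minimum number of bends of an orthogonal polyline inside `f` from `p` to `a` arriving
at `a` from direction `d`.  (A polyline on `m` points has `m - 2` bends; collinear
consecutive segments can always be merged, so the minimum is unaffected.) -/
noncomputable def bdist (f : Set Pt) (p a : Pt) (d : Dir) : ℕ :=
  sInf {b | ∃ l, PolyFrom f p a l ∧ ArrivesFrom d l ∧ l.length - 2 = b}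

/-- `F` is a histogram over the horizontal baseline `δ` from `(x₁, y₀)` to `(x₂, y₀)`:
the baseline is a segment on (the boundary of) `F`, and every point of `F` is reachable by a
vertical ray starting at the baseline and orthogonal to it. -/
def IsHistogram (F : Set Pt) (y₀ x₁ x₂ : ℝ) : Prop :=
  segment ℝ ((x₁, y₀) : Pt) ((x₂, y₀) : Pt) ⊆ F ∧
  ∀ p ∈ F, ((p.1, y₀) : Pt) ∈ segment ℝ ((x₁, y₀) : Pt) ((x₂, y₀) : Pt) ∧
    segment ℝ ((p.1, y₀) : Pt) p ⊆ F

theorem polyFrom_via_horizontal {f : Set Pt} {p q : Pt} (y : ℝ)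
    (hp : segment ℝ p (p.1, y) ⊆ f) (hpq : segment ℝ (p.1, y) (q.1, y) ⊆ f)
    (hq : segment ℝ (q.1, y) q ⊆ f) :
    PolyFrom f p q [p, (p.1, y), (q.1, y), q] := by
  refine ⟨⟨by simp, ?_⟩, rfl, rfl⟩
  exact List.isChain_cons_cons.2 ⟨⟨.inl rfl, hp⟩, List.isChain_cons_cons.2 ⟨⟨.inr rfl, hpq⟩,
    List.isChain_cons_cons.2 ⟨⟨.inl rfl, hq⟩, List.isChain_singleton q⟩⟩⟩

namespace IsHistogram

variable {F : Set Pt} {y₀ x₁ x₂ : ℝ}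

theorem segment_foot_subset (h : IsHistogram F y₀ x₁ x₂) {p : Pt} (hp : p ∈ F) :
    segment ℝ p (p.1, y₀) ⊆ F :=
  segment_symm ℝ p (p.1, y₀) ▸ (h.2 p hp).2

theorem segment_feet_subset (h : IsHistogram F y₀ x₁ x₂) {p q : Pt} (hp : p ∈ F) (hq : q ∈ F) :
    segment ℝ (p.1, y₀) (q.1, y₀) ⊆ F :=
  ((convex_segment _ _).segment_subset (h.2 p hp).1 (h.2 q hq).1).trans h.1

end IsHistogram

/-- For any sector `F` admitting a baseline (i.e. `F` is a histogram over a baseline `δ`),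
and any two points `p, q ∈ F`, there exists an orthogonal polyline from `p` to `q` lying
entirely inside `F` with at most 2 bends. -/
theorem stmt_2 (F : Set Pt) (y₀ x₁ x₂ : ℝ) (hhist : IsHistogram F y₀ x₁ x₂)
    (p q : Pt) (hp : p ∈ F) (hq : q ∈ F) :
    ∃ l, PolyFrom F p q l ∧ l.length - 2 ≤ 2 :=
  ⟨_, polyFrom_via_horizontal y₀ (hhist.segment_foot_subset hp) (hhist.segment_feet_subset hp hq)
    (segment_symm ℝ q (q.1, y₀) ▸ hhist.segment_foot_subset hq), by simp⟩
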